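/- arXiv:2603.27266 — 3 statements merged into one kernel-verified Lean document; each statement's English description precedes it below -/
import Mathlib

section
/- For every integer r ≥ 1 and every real s > 1, the Newton-type recurrence holds: r·t_r⋆(s) = ∑_{j=1}^{r} t_{r−j}⋆(s)·t(j s). -/
/-- The `t`-function for real `s > 1`: `t(s) = ∑_{n≥1} (2n−1)^{-s}`. -/
noncomputable def tFun (s : ℝ) : ℝ :=
  ∑' n : ℕ+, (((2 * (n : ℕ) - 1 : ℕ) : ℝ) ^ s)⁻¹

/-- The multiple `t`-star function at identical arguments:
`t_r⋆(s) = ∑_{n₁ ≥ ⋯ ≥ n_r ≥ 1} ((2n₁−1)⋯(2n_r−1))^{-s}`; by convention `t₀⋆(s) = 1`. -/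
noncomputable def multTStar (r : ℕ) (s : ℝ) : ℝ :=
  ∑' f : {f : Fin r → ℕ+ // Antitone f},
    ∏ i, (((2 * (f.1 i : ℕ) - 1 : ℕ) : ℝ) ^ s)⁻¹

/-!
Sorting identifies antitone tuples with multisets, so `t_r⋆(s)` is the complete homogeneous
symmetric function `h_r` of the infinitely many variables `x_n = (2n-1)^{-s}`, while `t(js)` is
the power sum `p_j`; the claim is Newton's identity `r h_r = ∑_{j=1}^r p_j h_{r-j}`.
Working in `ℝ≥0∞`, it follows by double counting: write the size `r` of a multiset `m` as
`∑_a ∑_{j ≥ 1} [j ≤ count a m]`, and note that adding `j` copies of `a` is a bijection from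
multisets of size `r - j` onto those of size `r` containing `a` at least `j` times.
For `s > 1` all power sums are finite, hence by the identity so is every `h_r`, and the identity
descends to `ℝ`.
-/

open Finset
open scoped ENNReal

section AntitoneTuple

variable {α : Type*} [LinearOrder α] {r : ℕ}

lemma Multiset.sort_ge_map_univ_of_antitone {f : Fin r → α} (hf : Antitone f) :
    (Multiset.map f univ.val).sort (· ≥ ·) = List.ofFn f := by
  refine List.Perm.eq_of_pairwise' (r := (· ≥ ·)) (Multiset.pairwise_sort _ _)
    (List.pairwise_ofFn.mpr fun _ _ hij => hf hij.le) ?_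
  rw [← Multiset.coe_eq_coe, Multiset.sort_eq, Fin.univ_val_map]

lemma Sym.length_sort_ge (m : Sym α r) : (m.1.sort (· ≥ ·)).length = r := by simp

noncomputable def Sym.sortedTuple (m : Sym α r) : Fin r → α :=
  fun i => (m.1.sort (· ≥ ·)).get (i.cast m.length_sort_ge.symm)

lemma Sym.antitone_sortedTuple (m : Sym α r) : Antitone m.sortedTuple :=
  fun _ _ hij => (Multiset.pairwise_sort m.1 (· ≥ ·)).rel_get_of_le hij

lemma Sym.ofFn_sortedTuple (m : Sym α r) : List.ofFn m.sortedTuple = m.1.sort (· ≥ ·) :=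
  List.ext_get (by simp) fun _ _ _ => by simp [Sym.sortedTuple]; rfl

noncomputable def antitoneTupleEquivSym (α : Type*) [LinearOrder α] (r : ℕ) :
    {f : Fin r → α // Antitone f} ≃ Sym α r where
  toFun f := ⟨Multiset.map f.1 univ.val, by simp⟩
  invFun m := ⟨m.sortedTuple, m.antitone_sortedTuple⟩
  left_inv f := by
    ext i
    simp only [Sym.sortedTuple, List.get_of_eq (Multiset.sort_ge_map_univ_of_antitone f.2)]
    simp
  right_inv m := by
    ext1
    change Multiset.map m.sortedTuple univ.val = m.1
    rw [Fin.univ_val_map, m.ofFn_sortedTuple, Multiset.sort_eq]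

end AntitoneTuple

lemma natCast_mul_eq_sum_Icc_ite {R : Type*} [NonAssocSemiring R] {n r : ℕ} (hn : n ≤ r)
    (c : R) : (n : R) * c = ∑ j ∈ Icc 1 r, if j ≤ n then c else 0 := by
  have hfilter : (Icc 1 r).filter (· ≤ n) = Icc 1 n := by
    ext k; simp only [mem_filter, mem_Icc]; omega
  rw [← sum_filter, hfilter, sum_const, Nat.card_Icc, nsmul_eq_mul, Nat.add_sub_cancel]

lemma Multiset.card_eq_tsum_count {α : Type*} [DecidableEq α] (m : Multiset α) :
    (Multiset.card m : ℝ≥0∞) = ∑' a, (m.count a : ℝ≥0∞) := by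
  rw [tsum_eq_sum (s := m.toFinset) fun a ha => by
      simp [Multiset.count_eq_zero.mpr (by simpa using ha)],
    ← Nat.cast_sum, m.toFinset_sum_count_eq]

def Sym.addReplicateEquiv {α : Type*} [DecidableEq α] {r j : ℕ} (hjr : j ≤ r) (a : α) :
    Sym α (r - j) ≃ {m : Sym α r // j ≤ m.1.count a} where
  toFun μ := ⟨⟨μ.1 + Multiset.replicate j a, by simp [Nat.sub_add_cancel hjr]⟩, by simp⟩
  invFun m := ⟨m.1.1 - Multiset.replicate j a, by
    rw [Multiset.card_sub (Multiset.le_count_iff_replicate_le.mp m.2)]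
    simp⟩
  left_inv μ := Subtype.ext (add_tsub_cancel_right _ _)
  right_inv m := Subtype.ext <| Subtype.ext <|
    tsub_add_cancel_of_le (Multiset.le_count_iff_replicate_le.mp m.2)

section Newton

variable {α : Type*} (x : α → ℝ≥0∞)

noncomputable def hsymmTsum (r : ℕ) : ℝ≥0∞ := ∑' m : Sym α r, (m.1.map x).prod

noncomputable def psumTsum (j : ℕ) : ℝ≥0∞ := ∑' a, x a ^ j

lemma hsymmTsum_zero : hsymmTsum x 0 = 1 := by
  rw [hsymmTsum, tsum_eq_single Sym.nil fun m hm => absurd (Subsingleton.elim _ _) hm]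
  simp

lemma tsum_ite_le_count_eq_pow_mul_hsymmTsum [DecidableEq α] {r j : ℕ} (hjr : j ≤ r) (a : α) :
    ∑' m : Sym α r, (if j ≤ m.1.count a then (m.1.map x).prod else 0)
      = x a ^ j * hsymmTsum x (r - j) :=
  calc ∑' m : Sym α r, (if j ≤ m.1.count a then (m.1.map x).prod else 0)
      = ∑' m : {m : Sym α r // j ≤ m.1.count a}, (m.1.1.map x).prod := by
        rw [← tsum_subtype_eq_of_support_subset (s := {m : Sym α r | j ≤ m.1.count a})]
        · exact tsum_congr fun m => if_pos m.2
        · exact fun m hm => by_contra fun h => hm (if_neg h)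
    _ = ∑' μ : Sym α (r - j), x a ^ j * (μ.1.map x).prod := by
        rw [← (Sym.addReplicateEquiv hjr a).tsum_eq]
        refine tsum_congr fun μ => ?_
        change ((μ.1 + Multiset.replicate j a).map x).prod = _
        simp [mul_comm]
    _ = x a ^ j * hsymmTsum x (r - j) := ENNReal.tsum_mul_left

theorem natCast_mul_hsymmTsum (r : ℕ) :
    r * hsymmTsum x r = ∑ j ∈ Icc 1 r, psumTsum x j * hsymmTsum x (r - j) := by
  classical
  calc r * hsymmTsum x r
      = ∑' m : Sym α r, ∑' a, (m.1.count a : ℝ≥0∞) * (m.1.map x).prod := by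
        rw [hsymmTsum, ← ENNReal.tsum_mul_left]
        refine tsum_congr fun m => ?_
        rw [ENNReal.tsum_mul_right, ← Multiset.card_eq_tsum_count, m.2]
    _ = ∑' a, ∑' m : Sym α r, ∑ j ∈ Icc 1 r,
          if j ≤ m.1.count a then (m.1.map x).prod else 0 := by
        rw [ENNReal.tsum_comm]
        refine tsum_congr fun a => tsum_congr fun m => natCast_mul_eq_sum_Icc_ite ?_ _
        exact (Multiset.count_le_card a m.1).trans m.2.le
    _ = ∑' a, ∑ j ∈ Icc 1 r, x a ^ j * hsymmTsum x (r - j) := by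
        refine tsum_congr fun a => ?_
        rw [Summable.tsum_finsetSum fun _ _ => ENNReal.summable]
        exact sum_congr rfl fun j hj =>
          tsum_ite_le_count_eq_pow_mul_hsymmTsum x (mem_Icc.mp hj).2 a
    _ = ∑ j ∈ Icc 1 r, psumTsum x j * hsymmTsum x (r - j) := by
        rw [Summable.tsum_finsetSum fun _ _ => ENNReal.summable]
        exact sum_congr rfl fun j _ => ENNReal.tsum_mul_right

variable {x}

lemma hsymmTsum_ne_top (hx : ∀ j, j ≠ 0 → psumTsum x j ≠ ∞) (r : ℕ) : hsymmTsum x r ≠ ∞ := by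
  induction r using Nat.strong_induction_on with
  | _ r ih =>
    rcases Nat.eq_zero_or_pos r with rfl | hr
    · simp [hsymmTsum_zero]
    have hfin : (r : ℝ≥0∞) * hsymmTsum x r ≠ ∞ := by
      rw [natCast_mul_hsymmTsum]
      refine ENNReal.sum_ne_top.mpr fun j hj => ?_
      obtain ⟨hj1, hjr⟩ := mem_Icc.mp hj
      exact ENNReal.mul_ne_top (hx j (by omega)) (ih _ (by omega))
    exact fun htop => hfin (by simp [htop, hr.ne'])

theorem natCast_mul_toReal_hsymmTsum (hx : ∀ j, j ≠ 0 → psumTsum x j ≠ ∞) (r : ℕ) :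
    r * (hsymmTsum x r).toReal
      = ∑ j ∈ Icc 1 r, (psumTsum x j).toReal * (hsymmTsum x (r - j)).toReal := by
  have h := congrArg ENNReal.toReal (natCast_mul_hsymmTsum x r)
  rw [ENNReal.toReal_mul, ENNReal.toReal_natCast, ENNReal.toReal_sum fun j hj =>
    ENNReal.mul_ne_top (hx j (by simp at hj; omega)) (hsymmTsum_ne_top hx _)] at h
  simpa only [ENNReal.toReal_mul] using h

end Newton

lemma toReal_hsymmTsum_eq_tsum_antitone {α : Type*} [LinearOrder α] {x : α → ℝ≥0∞}
    (hx : ∀ a, x a ≠ ∞) (r : ℕ) :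
    (hsymmTsum x r).toReal = ∑' f : {f : Fin r → α // Antitone f}, ∏ i, (x (f.1 i)).toReal := by
  have hprod (f : {f : Fin r → α // Antitone f}) :
      ((antitoneTupleEquivSym α r f).1.map x).prod = ∏ i, x (f.1 i) := by
    change ((Multiset.map f.1 univ.val).map x).prod = _
    rw [Multiset.map_map]
    rfl
  rw [hsymmTsum, ← (antitoneTupleEquivSym α r).tsum_eq, tsum_congr hprod,
    ENNReal.tsum_toReal_eq fun f => ENNReal.prod_ne_top fun _ _ => hx _]
  simp only [ENNReal.toReal_prod]

section OddTerms

noncomputable def tTerm (s : ℝ) (n : ℕ+) : ℝ≥0∞ :=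
  ENNReal.ofReal (((2 * (n : ℕ) - 1 : ℕ) : ℝ) ^ s)⁻¹

lemma PNat.cast_le_cast_two_mul_sub_one (n : ℕ+) : ((n : ℕ) : ℝ) ≤ ((2 * (n : ℕ) - 1 : ℕ) : ℝ) := by
  have := n.pos
  exact_mod_cast (by omega : (n : ℕ) ≤ 2 * (n : ℕ) - 1)

lemma tTerm_pow (s : ℝ) (j : ℕ) (n : ℕ+) : tTerm s n ^ j = tTerm (j * s) n := by
  have hpos : (0 : ℝ) ≤ ((2 * (n : ℕ) - 1 : ℕ) : ℝ) := Nat.cast_nonneg _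
  rw [tTerm, tTerm, ← ENNReal.ofReal_pow (by positivity), inv_pow, mul_comm (j : ℝ),
    Real.rpow_mul_natCast hpos]

lemma tFun_eq_toReal_tsum_tTerm (s : ℝ) : tFun s = (∑' n, tTerm s n).toReal := by
  unfold tTerm
  rw [tFun, ENNReal.tsum_toReal_eq fun _ => ENNReal.ofReal_ne_top]
  exact tsum_congr fun n => (ENNReal.toReal_ofReal (by positivity)).symm

lemma tsum_tTerm_ne_top {s : ℝ} (hs : 1 < s) : ∑' n, tTerm s n ≠ ∞ := by
  have hsum : Summable fun n : ℕ+ => (((n : ℕ) : ℝ) ^ s)⁻¹ :=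
    (Real.summable_nat_rpow_inv.mpr hs).comp_injective PNat.coe_injective
  refine ne_top_of_le_ne_top (b := ∑' n : ℕ+, ENNReal.ofReal (((n : ℕ) : ℝ) ^ s)⁻¹) ?_ ?_
  · rw [← ENNReal.ofReal_tsum_of_nonneg (fun _ => by positivity) hsum]
    exact ENNReal.ofReal_ne_top
  · refine ENNReal.tsum_le_tsum fun n => ENNReal.ofReal_le_ofReal ?_
    have hn : (0 : ℝ) < (n : ℕ) := by exact_mod_cast n.pos
    exact inv_anti₀ (by positivity)
      (Real.rpow_le_rpow hn.le (PNat.cast_le_cast_two_mul_sub_one n) (by linarith))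

lemma multTStar_eq_toReal_hsymmTsum (r : ℕ) (s : ℝ) :
    multTStar r s = (hsymmTsum (tTerm s) r).toReal := by
  rw [toReal_hsymmTsum_eq_tsum_antitone (x := tTerm s) (fun _ => ENNReal.ofReal_ne_top),
    multTStar]
  exact tsum_congr fun f => prod_congr rfl fun i _ => (ENNReal.toReal_ofReal (by positivity)).symm

end OddTerms

theorem multTStar_recurrence_general (r : ℕ) (s : ℝ) (hs : 1 < s) :
    (r : ℝ) * multTStar r s =
      ∑ j ∈ Finset.Icc 1 r, multTStar (r - j) s * tFun ((j : ℝ) * s) := by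
  have hpsum (j : ℕ) : psumTsum (tTerm s) j = ∑' n, tTerm (j * s) n :=
    tsum_congr fun n => tTerm_pow s j n
  have hfin (j : ℕ) (hj : j ≠ 0) : psumTsum (tTerm s) j ≠ ∞ := by
    have hj : (1 : ℝ) ≤ j := by exact_mod_cast Nat.one_le_iff_ne_zero.mpr hj
    rw [hpsum]
    exact tsum_tTerm_ne_top (one_lt_mul_of_le_of_lt hj hs)
  rw [multTStar_eq_toReal_hsymmTsum, natCast_mul_toReal_hsymmTsum hfin]
  refine sum_congr rfl fun j _ => ?_
  rw [multTStar_eq_toReal_hsymmTsum, tFun_eq_toReal_tsum_tTerm, hpsum, mul_comm]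

/-- For `r ≥ 1` and real `s > 1`:
`r·t_r⋆(s) = ∑_{j=1}^{r} t_{r−j}⋆(s)·t(js)`. -/
theorem multTStar_recurrence (r : ℕ) (hr : 1 ≤ r) (s : ℝ) (hs : 1 < s) :
    (r : ℝ) * multTStar r s =
      ∑ j ∈ Finset.Icc 1 r, multTStar (r - j) s * tFun ((j : ℝ) * s) :=
  multTStar_recurrence_general r s hs
end

section
/- Let r ≥ 1 be an integer and s ∈ ℝ with s > 1. Then t_r(s) = ∑ (−1)^{r+c₁+c₂+⋯+c_r} / (1^{c₁} c₁! · 2^{c₂} c₂! ⋯ r^{c_r} c_r!) · t(s)^{c₁} t(2s)^{c₂} ⋯ t(rs)^{c_r}, where the sum runs over all tuples (c₁,…,c_r) of nonnegative integers satisfying c₁ + 2c₂ + ⋯ + r·c_r = r. -/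
/-- The multiple `t`-function at identical arguments:
`t_r(s) = ∑_{n₁ > ⋯ > n_r > 0} ((2n₁−1)⋯(2n_r−1))^{-s}`. -/
noncomputable def multT (r : ℕ) (s : ℝ) : ℝ :=
  ∑' f : {f : Fin r → ℕ+ // StrictAnti f},
    ∏ i, (((2 * (f.1 i : ℕ) - 1 : ℕ) : ℝ) ^ s)⁻¹

/-- The (finite) set of all tuples `(c₁, …, c_r)` of nonnegative integers with
`c₁ + 2c₂ + ⋯ + r·c_r = r`. -/
def weightedTuples (r : ℕ) : Finset (Fin r → ℕ) :=
  (Fintype.piFinset fun _ : Fin r => Finset.range (r + 1)).filter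
    fun c => ∑ i : Fin r, (i.val + 1) * c i = r

/-!
For finitely many variables, Newton's identities `m e_m = ∑_{i<m} (-1)^i p_{i+1} e_{m-1-i}`
determine the elementary symmetric functions `e_m` from the power sums `p_k`. The sum over
weighted tuples on the right is the coefficient of `x^m` in `exp (∑_k (-1)^(k-1) p_k x^k / k)` and
satisfies the same recursion: `m = ∑ (i+1) cᵢ`, and removing one part of size `i+1` from a tuple
is a bijection onto the tuples of weight `m - (i+1)`. With `a_n = (2n-1)^(-s)`, `t_r(s)` is the
limit of `e_r` and `t(ks)` the limit of `p_k` over the finite sets of indices, and the formula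
passes to the limit because it is a polynomial in `p_1, …, p_r`.
-/

open Finset Filter Topology

theorem Multiset.mul_esymm_eq_sum_range {R : Type*} [CommRing R] (s : Multiset R) (m : ℕ) :
    (m : R) * s.esymm m =
      ∑ i ∈ Finset.range m, (-1) ^ i * (s.map (· ^ (i + 1))).sum * s.esymm (m - (i + 1)) := by
  classical
  have hpsum : ∀ k, MvPolynomial.aeval (R := R) (fun x : s.ToType => (x : R))
      (MvPolynomial.psum s.ToType R k) = (s.map (· ^ k)).sum := by
    intro k
    simp only [MvPolynomial.psum, map_sum, map_pow, MvPolynomial.aeval_X]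
    conv_rhs => rw [← Multiset.map_univ_coe s, Multiset.map_map]
    rfl
  have h := congrArg (MvPolynomial.aeval (R := R) (fun x : s.ToType => (x : R)))
    (MvPolynomial.mul_esymm_eq_sum s.ToType R m)
  simp only [map_mul, map_natCast, map_pow, map_neg, map_one, map_sum, hpsum,
    MvPolynomial.aeval_esymm_eq_multiset_esymm, Multiset.map_univ_coe] at h
  rw [h, sum_filter, Nat.sum_antidiagonal_eq_sum_range_succ
    (fun i j => if i < m then (-1) ^ i * s.esymm i * (s.map (· ^ j)).sum else 0),
    sum_range_succ, if_neg (lt_irrefl m), add_zero, mul_sum, ← sum_range_reflect]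
  refine sum_congr rfl fun i hi => ?_
  have hi : i < m := mem_range.1 hi
  rw [if_pos (by omega), show m - (m - 1 - i) = i + 1 by omega,
    show m - 1 - i = m - (i + 1) by omega]
  have hsign : (-1 : R) ^ (m + 1) * (-1) ^ (m - (i + 1)) = (-1) ^ i := by
    rw [← pow_add, show m + 1 + (m - (i + 1)) = i + 2 * (m - i) by omega, pow_add, pow_mul]
    simp
  rw [← hsign]
  ring

section WeightedTuples

variable {n m : ℕ}

def tupleWeight (c : Fin n → ℕ) : ℕ := ∑ i, (i.val + 1) * c i

def tuplesOfWeight (n m : ℕ) : Finset (Fin n → ℕ) :=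
  (Fintype.piFinset fun _ : Fin n => range (m + 1)).filter fun c => tupleWeight c = m

theorem weightedTuples_eq_tuplesOfWeight (r : ℕ) : weightedTuples r = tuplesOfWeight r r := rfl

theorem mul_le_tupleWeight (c : Fin n → ℕ) (i : Fin n) : (i.val + 1) * c i ≤ tupleWeight c :=
  single_le_sum (f := fun i : Fin n => (i.val + 1) * c i) (fun _ _ => Nat.zero_le _) (mem_univ i)

theorem tupleWeight_add (c d : Fin n → ℕ) :
    tupleWeight (c + d) = tupleWeight c + tupleWeight d := by
  simp [tupleWeight, mul_add, sum_add_distrib]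

theorem tupleWeight_single (i : Fin n) : tupleWeight (Pi.single i 1) = i.val + 1 := by
  simp [tupleWeight, Pi.single_apply]

theorem mem_tuplesOfWeight {c : Fin n → ℕ} : c ∈ tuplesOfWeight n m ↔ tupleWeight c = m := by
  refine ⟨fun h => (mem_filter.1 h).2, fun h => mem_filter.2 ⟨?_, h⟩⟩
  refine Fintype.mem_piFinset.2 fun i => mem_range.2 ?_
  have := mul_le_tupleWeight c i
  nlinarith

theorem tuplesOfWeight_zero : tuplesOfWeight n 0 = {0} := by
  ext c
  simp only [mem_tuplesOfWeight, mem_singleton]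
  refine ⟨fun h => funext fun i => ?_, fun h => by simp [h, tupleWeight]⟩
  have := mul_le_tupleWeight c i
  simp_all

end WeightedTuples

theorem sub_single_add_single {σ : Type*} [DecidableEq σ] {c : σ → ℕ} {i : σ} (hc : c i ≠ 0) :
    c - Pi.single i 1 + Pi.single i 1 = c := by
  funext j
  rcases eq_or_ne j i with rfl | hj
  · simp only [Pi.add_apply, Pi.sub_apply, Pi.single_eq_same]
    omega
  · simp [hj]

section ScaledMonomial

variable {σ K : Type*} [Fintype σ] [DecidableEq σ] [Field K]

noncomputable def scaledMonomial (q : σ → K) (c : σ → ℕ) : K := ∏ i, q i ^ c i / (c i).factorial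

theorem scaledMonomial_add_single [CharZero K] (q : σ → K) (c : σ → ℕ) (i : σ) :
    ((c i : K) + 1) * scaledMonomial q (c + Pi.single i 1) = q i * scaledMonomial q c := by
  have hrest : ∏ j ∈ {i}ᶜ, q j ^ (c + Pi.single i 1 : σ → ℕ) j /
      ((c + Pi.single i 1 : σ → ℕ) j).factorial = ∏ j ∈ {i}ᶜ, q j ^ c j / (c j).factorial :=
    prod_congr rfl fun j hj => by simp [Pi.single_eq_of_ne (by simpa using hj : j ≠ i)]
  rw [scaledMonomial, scaledMonomial, Fintype.prod_eq_mul_prod_compl i, hrest,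
    Fintype.prod_eq_mul_prod_compl i]
  simp only [Pi.add_apply, Pi.single_eq_same, Nat.factorial_succ, Nat.cast_mul, Nat.cast_succ]
  field_simp
  ring

theorem sum_tuplesOfWeight_mul_scaledMonomial [CharZero K] {n : ℕ} (q : Fin n → K) (i : Fin n)
    (m : ℕ) :
    ∑ c ∈ tuplesOfWeight n m, (c i : K) * scaledMonomial q c =
      if i.val + 1 ≤ m then q i * ∑ c ∈ tuplesOfWeight n (m - (i.val + 1)), scaledMonomial q c
      else 0 := by
  split_ifs with him
  · rw [← sum_filter_of_ne (p := fun c => c i ≠ 0) fun c _ h hc => by simp [hc] at h, mul_sum]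
    refine (sum_nbij' (· + Pi.single i 1) (· - Pi.single i 1) ?_ ?_ ?_ ?_ ?_).symm
    · intro c hc
      rw [mem_tuplesOfWeight] at hc
      rw [mem_filter, mem_tuplesOfWeight, tupleWeight_add, tupleWeight_single, hc]
      exact ⟨by omega, by simp⟩
    · intro c hc
      rw [mem_filter, mem_tuplesOfWeight] at hc
      have hw := tupleWeight_add (c - Pi.single i 1) (Pi.single i 1)
      rw [sub_single_add_single hc.2, tupleWeight_single] at hw
      rw [mem_tuplesOfWeight]
      omega
    · intro c _
      simp
    · intro c hc
      exact sub_single_add_single (mem_filter.1 hc).2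
    · intro c _
      simpa using (scaledMonomial_add_single q c i).symm
  · refine sum_eq_zero fun c hc => ?_
    have := mul_le_tupleWeight c i
    rw [mem_tuplesOfWeight.1 hc] at this
    have : c i = 0 := by nlinarith
    simp [this]

end ScaledMonomial

section EsymmOfPsums

variable {K : Type*} [Field K] {n m : ℕ}

/-- The coefficient of `x^m` in `∏_{k ≤ n} exp ((-1)^(k-1) p_k x^k / k)`; the entry `c i` of a
tuple is the exponent of `x^(i+1)`. For `m ≤ n` this is `e_m` in terms of the power sums `p`. -/
noncomputable def esymmOfPsums (n : ℕ) (p : ℕ → K) (m : ℕ) : K :=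
  ∑ c ∈ tuplesOfWeight n m,
    scaledMonomial (fun i : Fin n => (-1) ^ (i : ℕ) * p (i + 1) / ((i : ℕ) + 1)) c

theorem esymmOfPsums_zero (n : ℕ) (p : ℕ → K) : esymmOfPsums n p 0 = 1 := by
  simp [esymmOfPsums, tuplesOfWeight_zero, scaledMonomial]

theorem esymmOfPsums_eq_sum (n m : ℕ) (p : ℕ → K) :
    esymmOfPsums n p m = ∑ c ∈ tuplesOfWeight n m,
        (-1 : K) ^ (m + ∑ i, c i) /
          (∏ i : Fin n, ((((i : ℕ) + 1 : ℕ) : K) ^ c i * ((c i).factorial : K))) *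
        ∏ i : Fin n, p ((i : ℕ) + 1) ^ c i := by
  refine sum_congr rfl fun c hc => ?_
  rw [← mem_tuplesOfWeight.1 hc]
  have hsign : (-1 : K) ^ (tupleWeight c + ∑ i, c i) = ∏ i : Fin n, ((-1) ^ (i : ℕ)) ^ c i := by
    rw [tupleWeight, ← sum_add_distrib, ← prod_pow_eq_pow_sum]
    refine prod_congr rfl fun i _ => ?_
    rw [← pow_mul, show ((i : ℕ) + 1) * c i + c i = i * c i + 2 * c i by ring, pow_add,
      pow_mul (-1) 2]
    simp
  rw [hsign, scaledMonomial]
  simp only [mul_pow, div_pow, prod_div_distrib, prod_mul_distrib]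
  push_cast
  ring

theorem mul_esymmOfPsums [CharZero K] (p : ℕ → K) (hm : m ≤ n) :
    (m : K) * esymmOfPsums n p m =
      ∑ i ∈ range m, (-1) ^ i * p (i + 1) * esymmOfPsums n p (m - (i + 1)) := by
  set q : Fin n → K := fun i => (-1) ^ (i : ℕ) * p (i + 1) / ((i : ℕ) + 1) with hq
  let f : ℕ → K := fun i =>
    if i + 1 ≤ m then (-1) ^ i * p (i + 1) * esymmOfPsums n p (m - (i + 1)) else 0
  calc (m : K) * esymmOfPsums n p m
      = ∑ c ∈ tuplesOfWeight n m, ∑ i : Fin n,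
          ((i : ℕ) + 1 : K) * ((c i : K) * scaledMonomial q c) := by
        rw [esymmOfPsums, mul_sum]
        refine sum_congr rfl fun c hc => ?_
        rw [← mem_tuplesOfWeight.1 hc, tupleWeight]
        push_cast
        simp only [sum_mul, mul_assoc]
        rfl
    _ = ∑ i : Fin n, ((i : ℕ) + 1 : K) *
          ∑ c ∈ tuplesOfWeight n m, (c i : K) * scaledMonomial q c := by
        rw [sum_comm]
        simp only [mul_sum]
    _ = ∑ i : Fin n, f i := by
        refine sum_congr rfl fun i _ => ?_
        rw [sum_tuplesOfWeight_mul_scaledMonomial]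
        simp only [f]
        split_ifs
        · rw [esymmOfPsums, hq]
          field_simp
        · simp
    _ = ∑ i ∈ range m, (-1) ^ i * p (i + 1) * esymmOfPsums n p (m - (i + 1)) := by
        rw [Fin.sum_univ_eq_sum_range f, ← sum_range_add_sum_Ico _ hm,
          sum_eq_zero (s := Ico m n) fun i hi => if_neg (by simp at hi; omega), add_zero]
        exact sum_congr rfl fun i hi => if_pos (by simp at hi; omega)

theorem eq_of_newton_recursion [CharZero K] {p X Y : ℕ → K} (hX0 : X 0 = 1) (hY0 : Y 0 = 1)
    (hX : ∀ m ≤ n, (m : K) * X m = ∑ i ∈ range m, (-1) ^ i * p (i + 1) * X (m - (i + 1)))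
    (hY : ∀ m ≤ n, (m : K) * Y m = ∑ i ∈ range m, (-1) ^ i * p (i + 1) * Y (m - (i + 1))) :
    ∀ m ≤ n, X m = Y m := by
  intro m
  induction m using Nat.strong_induction_on with
  | _ m ih =>
    intro hm
    rcases Nat.eq_zero_or_pos m with rfl | hpos
    · rw [hX0, hY0]
    · refine mul_left_cancel₀ (Nat.cast_ne_zero.2 hpos.ne') ?_
      rw [hX m hm, hY m hm]
      refine sum_congr rfl fun i hi => ?_
      have := mem_range.1 hi
      rw [ih (m - (i + 1)) (by omega) (by omega)]

theorem Multiset.esymm_eq_esymmOfPsums [CharZero K] (s : Multiset K) (hm : m ≤ n) :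
    s.esymm m = esymmOfPsums n (fun k => (s.map (· ^ k)).sum) m :=
  eq_of_newton_recursion (by simp [Multiset.esymm]) (esymmOfPsums_zero n _)
    (fun m _ => s.mul_esymm_eq_sum_range m) (fun _ hm => mul_esymmOfPsums _ hm) m hm

theorem tendsto_esymmOfPsums [TopologicalSpace K] [IsTopologicalRing K] {α : Type*}
    {l : Filter α} {P : α → ℕ → K} {p : ℕ → K} (n m : ℕ)
    (h : ∀ k, Tendsto (fun x => P x (k + 1)) l (𝓝 (p (k + 1)))) :
    Tendsto (fun x => esymmOfPsums n (P x) m) l (𝓝 (esymmOfPsums n p m)) := by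
  unfold esymmOfPsums scaledMonomial
  refine tendsto_finsetSum _ fun c _ => tendsto_finsetProd _ fun i _ => ?_
  exact ((((h i).const_mul _).div_const _).pow _).div_const _

end EsymmOfPsums

section Summation

variable {ι : Type*}

theorem Summable.pow_of_ne_zero {a : ι → ℝ} (ha : Summable a) {k : ℕ} (hk : k ≠ 0) :
    Summable fun i => a i ^ k := by
  refine Summable.of_norm_bounded_eventually ha.abs ?_
  filter_upwards [ha.tendsto_cofinite_zero.eventually (Metric.closedBall_mem_nhds 0 one_pos)]
    with i hi
  rw [dist_zero_right] at hi
  rw [norm_pow]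
  exact pow_le_of_le_one (norm_nonneg _) hi hk

theorem Summable.summable_prod_finset {a : ι → ℝ} (ha : Summable a) :
    Summable fun A : Finset ι => ∏ i ∈ A, a i := by
  classical
  refine Summable.of_norm (summable_of_sum_le (c := Real.exp (∑' i, |a i|))
    (fun _ => norm_nonneg _) fun U => ?_)
  calc ∑ A ∈ U, ‖∏ i ∈ A, a i‖
      ≤ ∑ A ∈ (U.sup id).powerset, ∏ i ∈ A, |a i| := by
        simp only [norm_prod, Real.norm_eq_abs]
        exact sum_le_sum_of_subset_of_nonneg (fun A hA => mem_powerset.2 (le_sup (f := id) hA))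
          fun _ _ _ => prod_nonneg fun _ _ => abs_nonneg _
    _ = ∏ i ∈ U.sup id, (1 + |a i|) := (prod_one_add _).symm
    _ ≤ ∏ i ∈ U.sup id, Real.exp |a i| :=
        prod_le_prod (fun _ _ => by positivity) fun i _ => by linarith [Real.add_one_le_exp |a i|]
    _ = Real.exp (∑ i ∈ U.sup id, |a i|) := (Real.exp_sum _ _).symm
    _ ≤ Real.exp (∑' i, |a i|) := Real.exp_le_exp.2 (ha.abs.sum_le_tsum _ fun _ _ => abs_nonneg _)

theorem hasSum_prod_card_eq {a : ι → ℝ} (ha : Summable a) (r : ℕ) :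
    HasSum (fun A : {A : Finset ι // A.card = r} => ∏ i ∈ A.1, a i)
      (esymmOfPsums r (fun k => ∑' i, a i ^ k) r) := by
  classical
  set g := {A : Finset ι | A.card = r}.indicator fun A => ∏ i ∈ A, a i
  have hpartial : ∀ T : Finset ι,
      ∑ A ∈ T.powerset, g A = esymmOfPsums r (fun k => ∑ i ∈ T, a i ^ k) r := by
    intro T
    simp only [g, Set.indicator_apply, Set.mem_ofPred_eq]
    rw [← sum_filter, ← powersetCard_eq_filter, ← esymm_map_val,
      Multiset.esymm_eq_esymmOfPsums _ le_rfl]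
    simp [Multiset.map_map]
  have hg : Summable g := ha.summable_prod_finset.indicator _
  have hlim := hg.hasSum.comp tendsto_finset_powerset_atTop_atTop
  have hlim' := tendsto_esymmOfPsums (l := atTop) (P := fun T k => ∑ i ∈ T, a i ^ k)
    (p := fun k => ∑' i, a i ^ k) r r fun k => (ha.pow_of_ne_zero k.succ_ne_zero).hasSum
  have htsum := tendsto_nhds_unique hlim (hlim'.congr fun T => (hpartial T).symm)
  exact hasSum_subtype_iff_indicator.2 (htsum ▸ hg.hasSum)

theorem bijective_strictAnti_image [LinearOrder ι] (r : ℕ) :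
    Function.Bijective fun f : {f : Fin r → ι // StrictAnti f} =>
      (⟨univ.map ⟨f.1, f.2.injective⟩, by simp⟩ : {A : Finset ι // A.card = r}) := by
  refine ⟨fun f g hfg => Subtype.ext ?_, fun A => ?_⟩
  · have hrange : Set.range f.1 = Set.range g.1 := by
      simpa using congrArg (fun A : {A : Finset ι // A.card = r} => (A.1 : Set ι)) hfg
    exact (f.2.range_inj g.2).1 hrange
  · refine ⟨⟨fun i => A.1.orderEmbOfFin A.2 i.rev,
      fun i j hij => (A.1.orderEmbOfFin A.2).strictMono (Fin.rev_lt_rev.2 hij)⟩,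
      Subtype.ext (coe_injective ?_)⟩
    simp only [coe_map, Function.Embedding.coeFn_mk, coe_univ, Set.image_univ]
    rw [← Function.comp_def, Fin.rev_surjective.range_comp, range_orderEmbOfFin]

theorem hasSum_prod_strictAnti [LinearOrder ι] {a : ι → ℝ} (ha : Summable a) (r : ℕ) :
    HasSum (fun f : {f : Fin r → ι // StrictAnti f} => ∏ i, a (f.1 i))
      (esymmOfPsums r (fun k => ∑' i, a i ^ k) r) := by
  have := (Equiv.ofBijective _ (bijective_strictAnti_image r)).hasSum_iff.2
    (hasSum_prod_card_eq ha r)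
  simpa [Function.comp_def] using this

end Summation

theorem summable_inv_rpow_odd {s : ℝ} (hs : 1 < s) :
    Summable fun n : ℕ+ => (((2 * (n : ℕ) - 1 : ℕ) : ℝ) ^ s)⁻¹ :=
  (Real.summable_nat_rpow_inv.2 hs).comp_injective fun m n h =>
    PNat.coe_injective (by have := m.pos; have := n.pos; omega)

theorem tFun_natCast_mul (k : ℕ) (s : ℝ) :
    tFun (k * s) = ∑' n : ℕ+, ((((2 * (n : ℕ) - 1 : ℕ) : ℝ) ^ s)⁻¹) ^ k := by
  refine tsum_congr fun n => ?_
  rw [mul_comm (k : ℝ) s, Real.rpow_mul (Nat.cast_nonneg _), Real.rpow_natCast, inv_pow]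

theorem multT_explicit_general (r : ℕ) (s : ℝ) (hs : 1 < s) :
    multT r s =
      ∑ c ∈ weightedTuples r,
        (-1 : ℝ) ^ (r + ∑ i, c i) /
          (∏ i : Fin r, ((((i : ℕ) + 1 : ℕ) : ℝ) ^ c i * ((c i).factorial : ℝ))) *
        ∏ i : Fin r, tFun ((((i : ℕ) + 1 : ℕ) : ℝ) * s) ^ c i := by
  rw [multT, (hasSum_prod_strictAnti (summable_inv_rpow_odd hs) r).tsum_eq, esymmOfPsums_eq_sum,
    weightedTuples_eq_tuplesOfWeight]
  simp_rw [tFun_natCast_mul]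

/-- For `r ≥ 1` and real `s > 1`:
`t_r(s) = ∑_{c₁+2c₂+⋯+rc_r=r} (−1)^{r+c₁+⋯+c_r}/(1^{c₁}c₁!⋯r^{c_r}c_r!) · t(s)^{c₁}⋯t(rs)^{c_r}`. -/
theorem multT_explicit (r : ℕ) (hr : 1 ≤ r) (s : ℝ) (hs : 1 < s) :
    multT r s =
      ∑ c ∈ weightedTuples r,
        (-1 : ℝ) ^ (r + ∑ i, c i) /
          (∏ i : Fin r, ((((i : ℕ) + 1 : ℕ) : ℝ) ^ c i * ((c i).factorial : ℝ))) *
        ∏ i : Fin r, tFun ((((i : ℕ) + 1 : ℕ) : ℝ) * s) ^ c i :=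
  multT_explicit_general r s hs
end

section
/- For every integer r ≥ 1, the multiple t-value at identical argument 2 satisfies t_r(2) = ∑_{n₁ > n₂ > ⋯ > n_r > 0} ((2n₁−1)(2n₂−1)⋯(2n_r−1))^{-2} = π^{2r} / (2^{2r}·(2r)!). -/
/-!
Grouping the expansion of `∏ (1 - z / (2n-1)²)` by the number of factors gives the generating
function `∑ᵣ (-z)ʳ tᵣ(2)`. Splitting Euler's sine product into even and odd factors and using
`sin 2x = 2 sin x cos x` identifies the product with `cos (π √z / 2)`, whose Taylor series is
`∑ᵣ (-1)ʳ (π/2)²ʳ zʳ / (2r)!`. Both power series agree on `(0, 1)`, so their coefficients agree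
by the identity theorem.
-/

open Filter Finset Topology Real FormalMultilinearSeries

section StrictAnti

variable (ι : Type*) [LinearOrder ι] (r : ℕ)

def strictAntiEquivCardEq : {f : Fin r → ι // StrictAnti f} ≃ {s : Finset ι // s.card = r} where
  toFun f := ⟨univ.image f.1, by simp [card_image_of_injective _ f.2.injective]⟩
  invFun s := ⟨fun i => s.1.orderEmbOfFin s.2 i.rev,
    fun _ _ hij => (s.1.orderEmbOfFin s.2).strictMono (Fin.rev_lt_rev.2 hij)⟩
  left_inv f := by
    have hcard : (univ.image f.1).card = r := by
      simp [card_image_of_injective _ f.2.injective]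
    have h := orderEmbOfFin_unique hcard (f := f.1 ∘ Fin.rev)
      (fun _ => mem_image_of_mem _ (mem_univ _)) fun _ _ hij => f.2 (Fin.rev_lt_rev.2 hij)
    ext i
    simpa using (congrFun h i.rev).symm
  right_inv s := by
    apply Subtype.ext
    apply coe_injective
    simp only [coe_image, coe_univ, Set.image_univ]
    rw [show (fun i : Fin r => s.1.orderEmbOfFin s.2 i.rev) =
        s.1.orderEmbOfFin s.2 ∘ Fin.rev from rfl,
      Fin.rev_involutive.surjective.range_comp, range_orderEmbOfFin]

variable {ι r} {α : Type*} [CommSemiring α] [TopologicalSpace α]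

noncomputable def esymmTsum (a : ι → α) (r : ℕ) : α :=
  ∑' s : {s : Finset ι // s.card = r}, ∏ i ∈ s.1, a i

theorem tsum_strictAnti_prod_eq_esymmTsum (a : ι → α) :
    ∑' f : {f : Fin r → ι // StrictAnti f}, ∏ i, a (f.1 i) = esymmTsum a r := by
  rw [esymmTsum, ← (strictAntiEquivCardEq ι r).tsum_eq]
  exact tsum_congr fun f => (prod_image fun _ _ _ _ h => f.2.injective h).symm

end StrictAnti

section Esymm

variable {ι R : Type*} [NormedCommRing R] [NormOneClass R] [CompleteSpace R]

theorem hasSum_pow_mul_esymmTsum {a : ι → R} (ha : Summable (‖a ·‖)) (y : R) :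
    HasSum (fun r => y ^ r * esymmTsum a r) (∏' i, (1 + y * a i)) := by
  have hya : Summable (‖y * a ·‖) :=
    (ha.mul_left ‖y‖).of_nonneg_of_le (fun _ => norm_nonneg _) fun _ => norm_mul_le _ _
  have hfiber (r : ℕ) : HasSum (fun s : {s : Finset ι // s.card = r} => ∏ i ∈ s.1, y * a i)
      (y ^ r * esymmTsum a r) := by
    have hsub : Summable fun s : {s : Finset ι // s.card = r} => ∏ i ∈ s.1, a i :=
      (summable_finsetProd_of_summable_norm ha).comp_injective Subtype.val_injective
    have hterm (s : {s : Finset ι // s.card = r}) :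
        ∏ i ∈ s.1, y * a i = y ^ r * ∏ i ∈ s.1, a i := by
      rw [prod_mul_distrib, prod_const, s.2]
    simpa only [hterm, esymmTsum] using hsub.hasSum.mul_left (y ^ r)
  rw [tprod_one_add (summable_finsetProd_of_summable_norm hya)]
  have htotal := (summable_finsetProd_of_summable_norm hya).hasSum
  rw [← (Equiv.sigmaFiberEquiv card).hasSum_iff] at htotal
  exact htotal.sigma hfiber

end Esymm

theorem summable_sq_div_succ_sq (x : ℝ) : Summable fun j : ℕ => x ^ 2 / ((j : ℝ) + 1) ^ 2 := by
  have := (summable_nat_add_iff 1).2 (summable_one_div_nat_pow.2 one_lt_two)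
  simpa [div_eq_mul_inv] using this.mul_left (x ^ 2)

theorem multipliable_one_sub_sq_div_succ_sq (x : ℝ) {g : ℕ → ℕ} (hg : Function.Injective g) :
    Multipliable fun j => 1 - x ^ 2 / ((g j : ℝ) + 1) ^ 2 := by
  simpa [sub_eq_add_neg] using
    Real.multipliable_one_add_of_summable ((summable_sq_div_succ_sq x).comp_injective hg).neg

theorem pi_mul_mul_tprod_one_sub_sq_div_succ_sq (x : ℝ) :
    π * x * ∏' j : ℕ, (1 - x ^ 2 / ((j : ℝ) + 1) ^ 2) = sin (π * x) :=
  tendsto_nhds_unique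
    ((multipliable_one_sub_sq_div_succ_sq x Function.injective_id).tendsto_prod_tprod_nat.const_mul
      _)
    (tendsto_euler_sin_prod x)

theorem tprod_one_sub_sq_div_odd_sq {x : ℝ} (hx : sin (π * x / 2) ≠ 0) :
    ∏' k : ℕ, (1 - x ^ 2 / (2 * (k : ℝ) + 1) ^ 2) = cos (π * x / 2) := by
  set C := ∏' k : ℕ, (1 - x ^ 2 / (2 * (k : ℝ) + 1) ^ 2)
  -- The odd-indexed factors of the sine product at `x` are the sine product at `x / 2`.
  have hsplit : ∏' j : ℕ, (1 - x ^ 2 / ((j : ℝ) + 1) ^ 2) =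
      C * ∏' k : ℕ, (1 - (x / 2) ^ 2 / ((k : ℝ) + 1) ^ 2) := by
    have heven := multipliable_one_sub_sq_div_succ_sq x (g := (2 * ·))
      (mul_right_injective₀ two_ne_zero)
    have hodd := multipliable_one_sub_sq_div_succ_sq x (g := (2 * · + 1))
      ((add_left_injective 1).comp (mul_right_injective₀ two_ne_zero))
    rw [← tprod_even_mul_odd (f := fun j : ℕ => 1 - x ^ 2 / ((j : ℝ) + 1) ^ 2) heven hodd]
    congr 1
    · exact tprod_congr fun k => by push_cast; ring
    · refine tprod_congr fun k => ?_
      push_cast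
      have : (k : ℝ) + 1 ≠ 0 := by positivity
      field_simp
      ring
  have hsin := pi_mul_mul_tprod_one_sub_sq_div_succ_sq x
  have hsin_half := pi_mul_mul_tprod_one_sub_sq_div_succ_sq (x / 2)
  rw [← mul_div_assoc] at hsin_half
  have hdouble : sin (π * x) = 2 * sin (π * x / 2) * cos (π * x / 2) := by
    rw [← sin_two_mul]; ring_nf
  apply mul_left_cancel₀ (mul_ne_zero two_ne_zero hx)
  rw [← hdouble, ← hsin, hsplit, ← hsin_half]
  ring

theorem radius_ofScalars_pos_of_summable {c : ℕ → ℝ} {ρ : ℝ} (hρ : 0 < ρ)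
    (hc : Summable fun n => c n * ρ ^ n) : 0 < (ofScalars ℝ c).radius := by
  lift ρ to NNReal using hρ.le
  refine lt_of_lt_of_le (by exact_mod_cast hρ) ((ofScalars ℝ c).le_radius_of_tendsto (l := 0) ?_)
  simpa [ofScalars_norm, abs_mul, abs_of_nonneg hρ.le] using hc.tendsto_atTop_zero.norm

theorem coeff_eq_of_tsum_eq_on_Ioo {a b : ℕ → ℝ} {ρ : ℝ} (hρ : 0 < ρ)
    (ha : Summable fun n => a n * ρ ^ n) (hb : Summable fun n => b n * ρ ^ n)
    (heq : ∀ z ∈ Set.Ioo 0 ρ, ∑' n, a n * z ^ n = ∑' n, b n * z ^ n) : a = b := by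
  have hseries {c : ℕ → ℝ} (hc : Summable fun n => c n * ρ ^ n) :
      HasFPowerSeriesAt (ofScalarsSum c) (ofScalars ℝ c) 0 :=
    ((ofScalars ℝ c).hasFPowerSeriesOnBall
      (radius_ofScalars_pos_of_summable hρ hc)).hasFPowerSeriesAt
  have hfreq : ∃ᶠ z in 𝓝[≠] (0 : ℝ), ofScalarsSum a z = ofScalarsSum b z := by
    have hpos : ∀ᶠ z in 𝓝[>] (0 : ℝ), ofScalarsSum a z = ofScalarsSum b z := by
      filter_upwards [Ioo_mem_nhdsGT hρ] with z hz
      simpa only [ofScalars_sum_eq, smul_eq_mul] using heq z hz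
    exact hpos.frequently.filter_mono (nhdsWithin_mono _ fun z (hz : 0 < z) => hz.ne')
  have hev :=
    ((hseries ha).analyticAt.frequently_eq_iff_eventually_eq (hseries hb).analyticAt).1 hfreq
  exact ofScalars_series_injective ℝ ℝ
    (((hseries ha).congr hev).eq_formalMultilinearSeries (hseries hb))

theorem hasSum_cos_pi_mul_sqrt_div_two {z : ℝ} (hz : 0 ≤ z) :
    HasSum (fun r => (-1) ^ r * (π / 2) ^ (2 * r) / (2 * r).factorial * z ^ r)
      (cos (π * √z / 2)) := by
  convert hasSum_cos (π * √z / 2) using 2 with r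
  rw [show π * √z / 2 = π / 2 * √z by ring, mul_pow, pow_mul √z, sq_sqrt hz]
  ring

noncomputable def oddSqInv (n : ℕ+) : ℝ := (((2 * (n : ℕ) - 1 : ℕ) : ℝ) ^ 2)⁻¹

theorem oddSqInv_succPNat (k : ℕ) : oddSqInv k.succPNat = ((2 * (k : ℝ) + 1) ^ 2)⁻¹ := by
  rw [oddSqInv, Nat.succPNat_coe, show 2 * (k + 1) - 1 = 2 * k + 1 by omega]
  push_cast
  rfl

theorem summable_norm_oddSqInv : Summable (‖oddSqInv ·‖) := by
  rw [← Equiv.pnatEquivNat.symm.summable_iff]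
  refine (summable_sq_div_succ_sq 1).of_nonneg_of_le (fun _ => norm_nonneg _) fun k => ?_
  rw [Function.comp_apply, Equiv.pnatEquivNat_symm_apply, oddSqInv_succPNat, norm_inv, norm_pow,
    Real.norm_eq_abs, abs_of_nonneg (by positivity), one_pow, one_div]
  gcongr
  linarith [(Nat.cast_nonneg k : (0 : ℝ) ≤ k)]

theorem tprod_one_sub_sq_mul_oddSqInv {x : ℝ} (hx : sin (π * x / 2) ≠ 0) :
    ∏' n, (1 + -x ^ 2 * oddSqInv n) = cos (π * x / 2) := by
  rw [← tprod_one_sub_sq_div_odd_sq hx, ← Equiv.pnatEquivNat.symm.tprod_eq]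
  refine tprod_congr fun k => ?_
  rw [Equiv.pnatEquivNat_symm_apply, oddSqInv_succPNat, sub_eq_add_neg, neg_mul, div_eq_mul_inv]

theorem tsum_neg_pow_mul_esymmTsum_oddSqInv {z : ℝ} (hz : z ∈ Set.Ioo 0 1) :
    ∑' r, (-1) ^ r * esymmTsum oddSqInv r * z ^ r = cos (π * √z / 2) := by
  have hsqrt : 0 < √z ∧ √z < 1 := ⟨sqrt_pos.2 hz.1, (sqrt_lt' one_pos).2 (by simpa using hz.2)⟩
  have hsin : sin (π * √z / 2) ≠ 0 :=
    (sin_pos_of_pos_of_lt_pi (by nlinarith [pi_pos]) (by nlinarith [pi_pos])).ne'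
  rw [← tprod_one_sub_sq_mul_oddSqInv hsin, sq_sqrt hz.1.le,
    ← (hasSum_pow_mul_esymmTsum summable_norm_oddSqInv _).tsum_eq]
  exact tsum_congr fun r => by rw [neg_pow]; ring

theorem multT_at_two_general (r : ℕ) :
    (∑' f : {f : Fin r → ℕ+ // StrictAnti f},
        ∏ i, (((2 * (f.1 i : ℕ) - 1 : ℕ) : ℝ) ^ 2)⁻¹)
      = Real.pi ^ (2 * r) / (2 ^ (2 * r) * ((2 * r).factorial : ℝ)) := by
  have hcoeff : (fun r => (-1) ^ r * esymmTsum oddSqInv r) =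
      fun r => (-1) ^ r * (π / 2) ^ (2 * r) / (2 * r).factorial := by
    refine coeff_eq_of_tsum_eq_on_Ioo one_pos ?_ ?_ fun z hz => ?_
    · simpa using (hasSum_pow_mul_esymmTsum summable_norm_oddSqInv (-1)).summable
    · simpa using (hasSum_cos_pi_mul_sqrt_div_two zero_le_one).summable
    · rw [tsum_neg_pow_mul_esymmTsum_oddSqInv hz,
        (hasSum_cos_pi_mul_sqrt_div_two hz.1.le).tsum_eq]
  have h := congrFun hcoeff r
  rw [mul_div_assoc] at h
  refine (tsum_strictAnti_prod_eq_esymmTsum oddSqInv).trans ?_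
  rw [mul_left_cancel₀ (pow_ne_zero r (neg_ne_zero.2 one_ne_zero)) h, div_pow, div_div]

/-- For every `r ≥ 1`:
`t_r(2) = ∑_{n₁ > ⋯ > n_r > 0} ((2n₁−1)⋯(2n_r−1))^{-2} = π^{2r}/(2^{2r}·(2r)!)`. -/
theorem multT_at_two (r : ℕ) (hr : 1 ≤ r) :
    (∑' f : {f : Fin r → ℕ+ // StrictAnti f},
        ∏ i, (((2 * (f.1 i : ℕ) - 1 : ℕ) : ℝ) ^ 2)⁻¹)
      = Real.pi ^ (2 * r) / (2 ^ (2 * r) * ((2 * r).factorial : ℝ)) :=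
  multT_at_two_general r
end
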